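/- arXiv:2406.03774 — 7 statements merged into one kernel-verified Lean document; each statement's English description precedes it below -/
import Mathlib

section
/- Let g(t) = Σ_{n≥0} g_n t^n with g_0 ≠ 0 and f(t) = Σ_{n≥1} f_n t^n with f_1 ≠ 0 be real formal power series such that the Riordan array (g, f) is totally positive. Then for every real α > 0, the almost-Riordan array (t·g(t) + α | g, f) is totally positive. -/
/-- An infinite real matrix is totally positive if all its minors
(determinants of submatrices with strictly increasing rows/columns) are
nonnegative. -/
def TotallyPositive (M : ℕ → ℕ → ℝ) : Prop :=
  ∀ (k : ℕ) (r c : Fin k → ℕ), StrictMono r → StrictMono c →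
    0 ≤ (Matrix.of fun a b => M (r a) (c b)).det

/-- The Riordan array `(g, f)`: its `(n,k)` entry is the coefficient of `t^n`
in `g(t) * f(t)^k`. -/
noncomputable def riordan (g f : PowerSeries ℝ) : ℕ → ℕ → ℝ :=
  fun n k => PowerSeries.coeff n (g * f ^ k)

/-- The almost-Riordan array `(d | g, f)`: its `(n,0)` entry is `d_n`, and its
`(n,k)` entry for `k ≥ 1` is the coefficient of `t^n` in `t * g(t) * f(t)^(k-1)`. -/
noncomputable def almostRiordan (d g f : PowerSeries ℝ) : ℕ → ℕ → ℝ :=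
  fun n k =>
    if k = 0 then PowerSeries.coeff n d
    else PowerSeries.coeff n (PowerSeries.X * g * f ^ (k - 1))

lemma aR_entry (g f : PowerSeries ℝ) (α : ℝ) (n k : ℕ) (hn : n ≠ 0) :
    almostRiordan (PowerSeries.X * g + PowerSeries.C α) g f n k
      = riordan g f (n - 1) (k - 1) := by
  obtain ⟨m, rfl⟩ := Nat.exists_eq_succ_of_ne_zero hn
  unfold almostRiordan riordan
  split
  · next h =>
    subst h
    simp [PowerSeries.coeff_succ_X_mul, PowerSeries.coeff_C]
  · rw [mul_assoc, PowerSeries.coeff_succ_X_mul]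
    rfl

lemma aR_row0 (g f : PowerSeries ℝ) (α : ℝ) (k : ℕ) (hk : k ≠ 0) :
    almostRiordan (PowerSeries.X * g + PowerSeries.C α) g f 0 k = 0 := by
  unfold almostRiordan
  rw [if_neg hk, mul_assoc, PowerSeries.coeff_zero_eq_constantCoeff, map_mul]
  simp

lemma aR_00 (g f : PowerSeries ℝ) (α : ℝ) :
    almostRiordan (PowerSeries.X * g + PowerSeries.C α) g f 0 0 = α := by
  unfold almostRiordan
  rw [if_pos rfl, PowerSeries.coeff_zero_eq_constantCoeff]
  simp

theorem tp_almostRiordan_tg_add_alpha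
    (g f : PowerSeries ℝ)
    (hg : PowerSeries.constantCoeff g ≠ 0)
    (hf0 : PowerSeries.coeff 0 f = 0)
    (hf1 : PowerSeries.coeff 1 f ≠ 0)
    (hTP : TotallyPositive (riordan g f))
    (α : ℝ) (hα : 0 < α) :
    TotallyPositive
      (almostRiordan (PowerSeries.X * g + PowerSeries.C α) g f) := by
  set A := almostRiordan (PowerSeries.X * g + PowerSeries.C α) g f with hA
  intro k r c hr hc
  match k with
  | 0 => simp [Matrix.det_isEmpty]
  | Nat.succ m =>
    by_cases hr0 : r 0 = 0
    · -- row 0 included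
      by_cases hc0 : c 0 = 0
      · -- expand along the first row
        have hrow : ∀ j : Fin (m+1), j ≠ 0 →
            (Matrix.of fun a b => A (r a) (c b)) 0 j = 0 := by
          intro j hj
          have : c 0 < c j := hc (Fin.pos_of_ne_zero hj)
          have hcj : c j ≠ 0 := by omega
          simp only [Matrix.of_apply, hr0, hA]
          exact aR_row0 g f α _ hcj
        rw [Matrix.det_succ_row_zero]
        rw [Finset.sum_eq_single 0]
        · simp only [Fin.val_zero, pow_zero, one_mul, Matrix.of_apply, hr0, hc0,
            Fin.succAbove_zero]
          rw [hA, aR_00]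
          have hkey : 0 ≤ ((Matrix.of fun a b => A (r a) (c b)).submatrix
              Fin.succ Fin.succ).det := by
            have hrm : StrictMono (fun a : Fin m => r a.succ - 1) := by
              intro x y hxy
              have h1 : r x.succ < r y.succ := hr (by simpa using hxy)
              have h2 : r 0 < r x.succ := hr (Fin.succ_pos x)
              show r x.succ - 1 < r y.succ - 1
              omega
            have hcm : StrictMono (fun b : Fin m => c b.succ - 1) := by
              intro x y hxy
              have h1 : c x.succ < c y.succ := hc (by simpa using hxy)
              have h2 : c 0 < c x.succ := hc (Fin.succ_pos x)
              show c x.succ - 1 < c y.succ - 1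
              omega
            have heq : ((Matrix.of fun a b => A (r a) (c b)).submatrix
                Fin.succ Fin.succ)
                = Matrix.of fun (a b : Fin m) =>
                    riordan g f (r a.succ - 1) (c b.succ - 1) := by
              ext a b
              simp only [Matrix.submatrix_apply, Matrix.of_apply, hA]
              have hra : r a.succ ≠ 0 := by
                have : r 0 < r a.succ := hr (Fin.succ_pos a); omega
              rw [aR_entry g f α _ _ hra]
            rw [heq]
            exact hTP m _ _ hrm hcm
          exact mul_nonneg hα.le hkey
        · intro j _ hj
          rw [hrow j hj]
          ring
        · intro h; exact absurd (Finset.mem_univ 0) h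
      · -- first row of the minor is zero
        have : (Matrix.of fun a b => A (r a) (c b)).det = 0 := by
          apply Matrix.det_eq_zero_of_row_eq_zero 0
          intro j
          have hcj : c j ≠ 0 := by
            rcases eq_or_ne j 0 with rfl | hj
            · exact hc0
            · have : c 0 < c j := hc (Fin.pos_of_ne_zero hj); omega
          simp only [Matrix.of_apply, hr0, hA]
          exact aR_row0 g f α _ hcj
        rw [this]
    · -- all rows ≥ 1
      have hrpos : ∀ a, r a ≠ 0 := by
        intro a
        rcases eq_or_ne a 0 with rfl | ha
        · exact hr0
        · have : r 0 < r a := hr (Fin.pos_of_ne_zero ha); omega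
      have hM : (Matrix.of fun a b => A (r a) (c b))
          = Matrix.of fun a b => riordan g f (r a - 1) (c b - 1) := by
        ext a b
        simp only [Matrix.of_apply, hA]
        exact aR_entry g f α _ _ (hrpos a)
      rw [hM]
      by_cases hcol : ∃ b : Fin (m+1), b ≠ 0 ∧ c b = 1
      · obtain ⟨b, hb, hcb⟩ := hcol
        have hc0' : c 0 = 0 := by
          have : c 0 < c b := hc (Fin.pos_of_ne_zero hb); omega
        have : (Matrix.of fun a b => riordan g f (r a - 1) (c b - 1)).det = 0 := by
          apply Matrix.det_zero_of_column_eq (Ne.symm hb)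
          intro a
          simp [hc0', hcb]
        rw [this]
      · push_neg at hcol
        have hcm : StrictMono (fun b : Fin (m+1) => c b - 1) := by
          intro x y hxy
          have h1 : c x < c y := hc hxy
          have hy0 : y ≠ 0 := by
            intro h; subst h; exact absurd hxy (by simp)
          have h2 : c y ≠ 1 := hcol y hy0
          have h3 : c y ≠ 0 := by
            rcases eq_or_ne y 0 with rfl | hy
            · exact absurd rfl hy0
            · intro h
              have : c 0 < c y := hc (Fin.pos_of_ne_zero hy0)
              omega
          show c x - 1 < c y - 1
          omega
        have hrm : StrictMono (fun a : Fin (m+1) => r a - 1) := by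
          intro x y hxy
          have h1 : r x < r y := hr hxy
          have h2 : r x ≠ 0 := hrpos x
          show r x - 1 < r y - 1
          omega
        exact hTP (m+1) _ _ hrm hcm
end

section
/- Every almost-Riordan array factors as a semidirect product: for real formal power series d(t) = Σ_{n≥0} d_n t^n, g(t) = Σ_{n≥0} g_n t^n (g_0 ≠ 0) and f(t) = Σ_{n≥1} f_n t^n (f_1 ≠ 0), the almost-Riordan array (d | g, f) equals the matrix product [d, t·g] · (1 | 1, f), where [d, t·g] is the quasi-Riordan array and (1 | 1, f) is the almost-Riordan array that equals the direct sum of the 1×1 identity and the Riordan array (1, f). -/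
/-- The quasi-Riordan array `[g, f]`: its `(n,0)` entry is `g_n`, and its
`(n,k)` entry for `k ≥ 1` is the coefficient of `t^n` in `t^(k-1) * f(t)`. -/
noncomputable def quasiRiordan (g f : PowerSeries ℝ) : ℕ → ℕ → ℝ :=
  fun n k =>
    if k = 0 then PowerSeries.coeff n g
    else PowerSeries.coeff n (PowerSeries.X ^ (k - 1) * f)

/-- Entrywise product of two infinite matrices whose left factor is lower
triangular, so that the sum defining each entry is finite. -/
def matProd (A B : ℕ → ℕ → ℝ) : ℕ → ℕ → ℝ :=
  fun n k => ∑ j ∈ Finset.range (n + 1), A n j * B j k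

theorem almostRiordan_factorization
    (d g f : PowerSeries ℝ)
    (hg : PowerSeries.constantCoeff g ≠ 0)
    (hf0 : PowerSeries.coeff 0 f = 0)
    (hf1 : PowerSeries.coeff 1 f ≠ 0) :
    almostRiordan d g f
      = matProd (quasiRiordan d (PowerSeries.X * g)) (almostRiordan 1 1 f) := by
  funext n k
  simp only [matProd, almostRiordan, quasiRiordan, mul_one, one_mul]
  rcases eq_or_ne k 0 with hk | hk
  · subst hk
    simp only [if_true]
    rw [Finset.sum_eq_single 0]
    · simp
    · intro j hj hj0
      simp [hj0, PowerSeries.coeff_one]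
    · intro h; simp at h
  · simp only [hk, if_false]
    rw [Finset.sum_range_succ']
    have h0 : (PowerSeries.coeff 0) (PowerSeries.X * f ^ (k - 1)) = 0 := by
      simp [PowerSeries.coeff_zero_eq_constantCoeff]
    simp only [if_true, Nat.add_sub_cancel, h0, mul_zero, add_zero,
      Nat.succ_ne_zero, if_false, PowerSeries.coeff_succ_X_mul]
    cases n with
    | zero => simp [PowerSeries.coeff_zero_eq_constantCoeff]
    | succ m =>
      have : PowerSeries.X * g * f ^ (k - 1)
          = PowerSeries.X * (f ^ (k - 1) * g) := by ring
      rw [this, PowerSeries.coeff_succ_X_mul, PowerSeries.coeff_mul,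
        Finset.Nat.sum_antidiagonal_eq_sum_range_succ_mk]
      refine Finset.sum_congr rfl fun i hi => ?_
      have hi' : i ≤ m := Nat.lt_succ_iff.mp (Finset.mem_range.mp hi)
      have : PowerSeries.X ^ i * (PowerSeries.X * g)
          = PowerSeries.X ^ (i + 1) * g := by ring
      rw [this]
      have hmi : m + 1 = (m - i) + (i + 1) := by omega
      rw [hmi, PowerSeries.coeff_X_pow_mul]
      ring
end

section
/- Let d(t) = Σ_{n≥0} d_n t^n and g(t) = Σ_{n≥0} g_n t^n (g_0 ≠ 0) be real formal power series, and let f(t) = Σ_{n≥1} f_n t^n (f_1 ≠ 0) be a Pólya frequency formal power series. If the quasi-Riordan array [d, t·g] is totally positive, then the almost-Riordan array (d | g, f) is totally positive. -/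
/-- A formal power series is a Pólya frequency series if its Toeplitz matrix
of coefficients is totally positive. -/
noncomputable def PolyaFrequency (a : PowerSeries ℝ) : Prop :=
  TotallyPositive (fun i j => if j ≤ i then PowerSeries.coeff (i - j) a else 0)

open Finset Matrix

/-! ### Cauchy–Binet -/

open scoped Classical in
lemma myCauchyBinet {m N : ℕ} (A : Fin m → Fin N → ℝ) (B : Fin N → Fin m → ℝ) :
    (Matrix.of fun a b => ∑ j : Fin N, A a j * B j b).det
      = ∑ s ∈ Finset.univ.filter (fun s : Fin m → Fin N => StrictMono s),
          (Matrix.of fun a b => A a (s b)).det * (Matrix.of fun a b => B (s a) b).det := by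
  -- Step 1: multilinear expansion
  have step1 : (Matrix.of fun a b => ∑ j : Fin N, A a j * B j b).det
      = ∑ φ : Fin m → Fin N, (∏ a, A a (φ a)) * (Matrix.of fun a b => B (φ a) b).det := by
    have h1 : (Matrix.of fun a b => ∑ j : Fin N, A a j * B j b).det
        = Matrix.detRowAlternating (fun a : Fin m => ∑ j : Fin N, A a j • B j) := by
      congr 1
      ext a b
      simp [Finset.sum_apply]
    rw [h1, ← AlternatingMap.coe_multilinearMap]
    rw [(Matrix.detRowAlternating :
        (Fin m → ℝ) [⋀^Fin m]→ₗ[ℝ] ℝ).toMultilinearMap.map_sum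
        (g := fun a j => A a j • B j)]
    refine Finset.sum_congr rfl fun φ _ => ?_
    rw [(Matrix.detRowAlternating :
        (Fin m → ℝ) [⋀^Fin m]→ₗ[ℝ] ℝ).toMultilinearMap.map_smul_univ
        (fun a => A a (φ a)) (fun a => B (φ a))]
    simp only [smul_eq_mul]; rfl
  rw [step1,
    ← Finset.sum_filter_add_sum_filter_not Finset.univ
      (fun φ : Fin m → Fin N => Function.Injective φ)]
  have h2 : ∑ φ ∈ Finset.univ.filter
        (fun φ : Fin m → Fin N => ¬ Function.Injective φ),
        (∏ a, A a (φ a)) * (Matrix.of fun a b => B (φ a) b).det = 0 := by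
    refine Finset.sum_eq_zero fun φ hφ => ?_
    simp only [Finset.mem_filter] at hφ
    rw [Function.not_injective_iff] at hφ
    obtain ⟨x, y, hxy, hne⟩ := hφ.2
    rw [Matrix.det_zero_of_row_eq hne (by funext b; simp [hxy]), mul_zero]
  rw [h2, add_zero]
  -- Step 3 : group injective functions as (strictly monotone) ∘ (permutation)
  have step3 : ∑ φ ∈ Finset.univ.filter
        (fun φ : Fin m → Fin N => Function.Injective φ),
        (∏ a, A a (φ a)) * (Matrix.of fun a b => B (φ a) b).det
      = ∑ p ∈ (Finset.univ.filter (fun s : Fin m → Fin N => StrictMono s)) ×ˢ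
          (Finset.univ : Finset (Equiv.Perm (Fin m))),
        (∏ a, A a (p.1 (p.2 a))) * (Matrix.of fun a b => B (p.1 (p.2 a)) b).det := by
    refine Finset.sum_nbij' (i := fun φ => (φ ∘ Tuple.sort φ, (Tuple.sort φ)⁻¹))
      (j := fun p => p.1 ∘ p.2) ?_ ?_ ?_ ?_ ?_
    · intro φ hφ
      simp only [Finset.mem_filter, Finset.mem_univ, true_and] at hφ ⊢
      rw [Finset.mem_product]
      refine ⟨?_, Finset.mem_univ _⟩
      simp only [Finset.mem_filter, Finset.mem_univ, true_and]
      exact (Tuple.monotone_sort φ).strictMono_of_injective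
        (hφ.comp (Equiv.injective _))
    · intro p hp
      rw [Finset.mem_product] at hp
      simp only [Finset.mem_filter, Finset.mem_univ, true_and] at hp ⊢
      exact hp.1.injective.comp (Equiv.injective _)
    · intro φ hφ
      funext a
      simp
    · intro p hp
      rw [Finset.mem_product] at hp
      simp only [Finset.mem_filter, Finset.mem_univ, true_and] at hp
      obtain ⟨s, σ⟩ := p
      have hs : StrictMono s := hp.1
      set τ := Tuple.sort (s ∘ σ) with hτ
      have hmono : StrictMono ((s ∘ σ) ∘ τ) :=
        (Tuple.monotone_sort (s ∘ σ)).strictMono_of_injective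
          ((hs.injective.comp (Equiv.injective σ)).comp (Equiv.injective τ))
      have hrange : Set.range ((s ∘ σ) ∘ τ) = Set.range s :=
        ((Equiv.surjective τ).range_comp (s ∘ σ)).trans
          ((Equiv.surjective σ).range_comp s)
      have heq : (s ∘ σ) ∘ τ = s := by
        haveI : WellFoundedLT (Fin m) := Finite.to_wellFoundedLT
        exact (hmono.range_inj hs).mp hrange
      have hστ : ∀ a, σ (τ a) = a := by
        intro a
        have := congrFun heq a
        exact hs.injective this
      have hτσ : τ⁻¹ = σ := by
        ext x
        have h1 := hστ (τ⁻¹ x)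
        rw [show τ (τ⁻¹ x) = x from Equiv.apply_symm_apply τ x] at h1
        exact congrArg Fin.val h1.symm
      exact Prod.ext heq hτσ
    · intro φ hφ
      have : ∀ a, (φ ∘ Tuple.sort φ) ((Tuple.sort φ)⁻¹ a) = φ a := by
        intro a; simp
      simp only [this]
  rw [step3, Finset.sum_product]
  refine Finset.sum_congr rfl fun s hs => ?_
  have hdet : (Matrix.of fun a b => A a (s b)).det
      = ∑ σ : Equiv.Perm (Fin m),
          ((Equiv.Perm.sign σ : ℤ) : ℝ) * ∏ i, A i (s (σ i)) := by
    rw [← Matrix.det_transpose, Matrix.det_apply]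
    refine Finset.sum_congr rfl fun σ _ => ?_
    simp [Matrix.transpose_apply, Units.smul_def, zsmul_eq_mul]
  calc ∑ σ : Equiv.Perm (Fin m),
        (∏ a, A a (s (σ a))) * (Matrix.of fun a b => B (s (σ a)) b).det
      = ∑ σ : Equiv.Perm (Fin m),
        (((Equiv.Perm.sign σ : ℤ) : ℝ) * ∏ a, A a (s (σ a)))
          * (Matrix.of fun a b => B (s a) b).det := by
        refine Finset.sum_congr rfl fun σ _ => ?_
        have : (Matrix.of fun a b => B (s (σ a)) b)
            = (Matrix.of fun a b => B (s a) b).submatrix σ id := rfl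
        rw [this, Matrix.det_permute]
        ring
    _ = (∑ σ : Equiv.Perm (Fin m),
          ((Equiv.Perm.sign σ : ℤ) : ℝ) * ∏ a, A a (s (σ a)))
          * (Matrix.of fun a b => B (s a) b).det := by
        rw [Finset.sum_mul]
    _ = _ := by rw [← hdet]

open scoped Classical in
lemma det_nonneg_of_prod {m N : ℕ} (A : Fin m → Fin N → ℝ) (B : Fin N → Fin m → ℝ)
    (hA : ∀ s : Fin m → Fin N, StrictMono s → 0 ≤ (Matrix.of fun a b => A a (s b)).det)
    (hB : ∀ s : Fin m → Fin N, StrictMono s → 0 ≤ (Matrix.of fun a b => B (s a) b).det) :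
    0 ≤ (Matrix.of fun a b => ∑ j : Fin N, A a j * B j b).det := by
  rw [myCauchyBinet]
  refine Finset.sum_nonneg fun s hs => ?_
  simp only [Finset.mem_filter] at hs
  exact mul_nonneg (hA s hs.2) (hB s hs.2)

/-! ### Power series helpers -/

lemma coeff_mul_expand (u h : PowerSeries ℝ) {i N : ℕ} (hiN : i < N) :
    PowerSeries.coeff i (u * h)
      = ∑ l ∈ Finset.range N,
          PowerSeries.coeff i (PowerSeries.X ^ l * u) * PowerSeries.coeff l h := by
  have hsub : Finset.range (i + 1) ⊆ Finset.range N := Finset.range_subset_range.mpr hiN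
  have hz : ∀ l ∈ Finset.range N, l ∉ Finset.range (i + 1) →
      PowerSeries.coeff i (PowerSeries.X ^ l * u) * PowerSeries.coeff l h = 0 := by
    intro l _ hl
    rw [Finset.mem_range, Nat.lt_succ_iff, not_le] at hl
    rw [PowerSeries.coeff_X_pow_mul', if_neg (by omega), zero_mul]
  rw [← Finset.sum_subset hsub hz]
  rw [mul_comm u h, PowerSeries.coeff_mul, Finset.Nat.sum_antidiagonal_eq_sum_range_succ_mk]
  refine Finset.sum_congr rfl fun l hl => ?_
  rw [Finset.mem_range, Nat.lt_succ_iff] at hl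
  rw [PowerSeries.coeff_X_pow_mul', if_pos hl, mul_comm]

/-! ### Toeplitz matrices of powers of `f` are totally positive -/

lemma tp_Tpow (f : PowerSeries ℝ) (hfPF : PolyaFrequency f) :
    ∀ k, 1 ≤ k →
      TotallyPositive (fun i j => PowerSeries.coeff i (PowerSeries.X ^ j * f ^ k)) := by
  have hbase : TotallyPositive
      (fun i j => PowerSeries.coeff i (PowerSeries.X ^ j * f ^ 1)) := by
    have : (fun i j => PowerSeries.coeff i (PowerSeries.X ^ j * f ^ 1))
        = (fun i j => if j ≤ i then PowerSeries.coeff (i - j) f else 0) := by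
      funext i j
      rw [pow_one, PowerSeries.coeff_X_pow_mul']
    rw [this]
    exact hfPF
  intro k
  induction k with
  | zero => intro h; omega
  | succ k IH =>
    intro _
    by_cases hk0 : k = 0
    · subst hk0
      exact hbase
    · have hk : 1 ≤ k := Nat.one_le_iff_ne_zero.mpr hk0
      intro m r c hr hc
      cases m with
      | zero => simp [Matrix.det_isEmpty]
      | succ m' =>
        set N := r (Fin.last m') + 1 with hN
        have hrN : ∀ a, r a < N := fun a =>
          Nat.lt_succ_of_le (hr.monotone (Fin.le_last a))
        have entry : ∀ (a : Fin (m' + 1)) (b : Fin (m' + 1)),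
            PowerSeries.coeff (r a) (PowerSeries.X ^ (c b) * f ^ (k + 1))
              = ∑ j : Fin N,
                  PowerSeries.coeff (r a) (PowerSeries.X ^ (j : ℕ) * f ^ 1) *
                  PowerSeries.coeff (j : ℕ) (PowerSeries.X ^ (c b) * f ^ k) := by
          intro a b
          have hprod : PowerSeries.X ^ (c b) * f ^ (k + 1)
              = f * (PowerSeries.X ^ (c b) * f ^ k) := by ring
          rw [hprod, coeff_mul_expand f (PowerSeries.X ^ (c b) * f ^ k) (hrN a),
            Finset.sum_range]
          simp [pow_one]
        have hmat : (Matrix.of fun a b =>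
            (fun i j => PowerSeries.coeff i (PowerSeries.X ^ j * f ^ (k+1))) (r a) (c b))
            = Matrix.of fun a b => ∑ j : Fin N,
                (fun (a : Fin (m'+1)) (j : Fin N) =>
                  PowerSeries.coeff (r a) (PowerSeries.X ^ (j : ℕ) * f ^ 1)) a j *
                (fun (j : Fin N) (b : Fin (m'+1)) =>
                  PowerSeries.coeff (j : ℕ) (PowerSeries.X ^ (c b) * f ^ k)) j b := by
          ext a b
          exact entry a b
        rw [hmat]
        refine det_nonneg_of_prod _ _ ?_ ?_
        · intro s hs
          exact hbase (m' + 1) r (fun b => (s b : ℕ)) hr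
            (Fin.val_strictMono.comp hs)
        · intro s hs
          exact IH hk (m' + 1) (fun a => (s a : ℕ)) c
            (Fin.val_strictMono.comp hs) hc

/-! ### The matrix of coefficients of powers of `f` is totally positive -/

lemma tp_Dpow (f : PowerSeries ℝ) (hfPF : PolyaFrequency f) :
    TotallyPositive (fun i k => PowerSeries.coeff i (f ^ k)) := by
  intro m
  induction m with
  | zero =>
    intro r c _ _
    have : (Matrix.of fun (a : Fin 0) (b : Fin 0) =>
        PowerSeries.coeff (r a) (f ^ (c b))).det = 1 := Matrix.det_isEmpty
    rw [this]; norm_num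
  | succ m IH =>
    -- the case where the first column index is 0
    have hzero : ∀ (r c : Fin (m + 1) → ℕ), StrictMono r → StrictMono c → c 0 = 0 →
        0 ≤ (Matrix.of fun a b => PowerSeries.coeff (r a) (f ^ (c b))).det := by
      intro r c hr hc hc0
      by_cases hr0 : r 0 = 0
      · rw [Matrix.det_succ_column_zero]
        rw [Finset.sum_eq_single 0]
        · simp only [Fin.val_zero, pow_zero, one_mul, Matrix.of_apply]
          rw [hc0, pow_zero, PowerSeries.coeff_one, if_pos hr0, one_mul]
          have : ((Matrix.of fun a b => PowerSeries.coeff (r a) (f ^ (c b))).submatrix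
              (Fin.succAbove 0) Fin.succ)
              = Matrix.of fun a b =>
                  PowerSeries.coeff ((r ∘ Fin.succ) a) (f ^ ((c ∘ Fin.succ) b)) := by
            ext a b
            simp [Fin.succAbove_zero]
          rw [this]
          exact IH (r ∘ Fin.succ) (c ∘ Fin.succ)
            (hr.comp Fin.strictMono_succ) (hc.comp Fin.strictMono_succ)
        · intro a _ ha
          have : r a ≠ 0 := by
            have := hr (Fin.pos_of_ne_zero ha)
            omega
          simp only [Matrix.of_apply]
          rw [hc0, pow_zero, PowerSeries.coeff_one, if_neg this]
          ring
        · intro h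
          exact absurd (Finset.mem_univ _) h
      · apply le_of_eq
        symm
        apply Matrix.det_eq_zero_of_column_eq_zero 0
        intro a
        simp only [Matrix.of_apply]
        rw [hc0, pow_zero, PowerSeries.coeff_one, if_neg]
        intro h
        have : r 0 ≤ r a := hr.monotone (Fin.zero_le a)
        omega
    intro r c hr hc
    by_cases hc0 : c 0 = 0
    · exact hzero r c hr hc hc0
    · have hk0 : 1 ≤ c 0 := Nat.one_le_iff_ne_zero.mpr hc0
      set N := r (Fin.last m) + 1 with hN
      have hrN : ∀ a, r a < N := fun a =>
        Nat.lt_succ_of_le (hr.monotone (Fin.le_last a))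
      have entry : ∀ (a b : Fin (m + 1)),
          PowerSeries.coeff (r a) (f ^ (c b))
            = ∑ j : Fin N,
                PowerSeries.coeff (r a) (PowerSeries.X ^ (j : ℕ) * f ^ (c 0)) *
                PowerSeries.coeff (j : ℕ) (f ^ (c b - c 0)) := by
        intro a b
        have hle : c 0 ≤ c b := hc.monotone (Fin.zero_le b)
        have hsplit : f ^ (c b) = f ^ (c 0) * f ^ (c b - c 0) := by
          rw [← pow_add]
          congr 1
          omega
        rw [hsplit, coeff_mul_expand (f ^ (c 0)) (f ^ (c b - c 0)) (hrN a),
          Finset.sum_range]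
      have hmat : (Matrix.of fun a b => PowerSeries.coeff (r a) (f ^ (c b)))
          = Matrix.of fun a b => ∑ j : Fin N,
              (fun (a : Fin (m+1)) (j : Fin N) =>
                PowerSeries.coeff (r a) (PowerSeries.X ^ (j : ℕ) * f ^ (c 0))) a j *
              (fun (j : Fin N) (b : Fin (m+1)) =>
                PowerSeries.coeff (j : ℕ) (f ^ (c b - c 0))) j b := by
        ext a b
        exact entry a b
      rw [hmat]
      refine det_nonneg_of_prod _ _ ?_ ?_
      · intro s hs
        exact tp_Tpow f hfPF (c 0) hk0 (m + 1) r (fun b => (s b : ℕ)) hr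
          (Fin.val_strictMono.comp hs)
      · intro s hs
        have hc' : StrictMono (fun b => c b - c 0) := by
          intro x y hxy
          have h1 : c 0 ≤ c x := hc.monotone (Fin.zero_le x)
          have h2 : c x < c y := hc hxy
          show c x - c 0 < c y - c 0
          omega
        exact hzero (fun a => (s a : ℕ)) (fun b => c b - c 0)
          (Fin.val_strictMono.comp hs) hc' (by simp)

/-! ### The matrix `C` -/

/-- The connecting matrix: column `0` is `e₀`, and for `k ≥ 1` column `k`
consists of the coefficients of `t·f(t)^(k-1)`. -/
noncomputable def connC (f : PowerSeries ℝ) : ℕ → ℕ → ℝ :=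
  fun j k =>
    if k = 0 then (if j = 0 then 1 else 0)
    else PowerSeries.coeff j (PowerSeries.X * f ^ (k - 1))

lemma coeff_zero_X_mul (u : PowerSeries ℝ) :
    PowerSeries.coeff 0 (PowerSeries.X * u) = 0 := by
  rw [← pow_one (PowerSeries.X : PowerSeries ℝ), PowerSeries.coeff_X_pow_mul']
  simp

lemma coeff_X_mul_of_pos (u : PowerSeries ℝ) {j : ℕ} (hj : 1 ≤ j) :
    PowerSeries.coeff j (PowerSeries.X * u) = PowerSeries.coeff (j - 1) u := by
  rw [← pow_one (PowerSeries.X : PowerSeries ℝ), PowerSeries.coeff_X_pow_mul', if_pos hj]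

lemma tp_connC_pos (f : PowerSeries ℝ) (hfPF : PolyaFrequency f) :
    ∀ (m : ℕ) (r c : Fin m → ℕ), StrictMono r → StrictMono c → (∀ b, 1 ≤ c b) →
      0 ≤ (Matrix.of fun a b => connC f (r a) (c b)).det := by
  intro m r c hr hc hc1
  cases m with
  | zero =>
    have : (Matrix.of fun (a : Fin 0) (b : Fin 0) => connC f (r a) (c b)).det = 1 :=
      Matrix.det_isEmpty
    rw [this]; norm_num
  | succ m' =>
    by_cases hr0 : r 0 = 0
    · apply le_of_eq
      symm
      apply Matrix.det_eq_zero_of_row_eq_zero 0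
      intro b
      simp only [Matrix.of_apply, connC]
      rw [if_neg (by have := hc1 b; omega), hr0, coeff_zero_X_mul]
    · have hra : ∀ a, 1 ≤ r a := by
        intro a
        have := hr.monotone (Fin.zero_le a)
        omega
      have hmat : (Matrix.of fun a b => connC f (r a) (c b))
          = Matrix.of fun a b =>
              PowerSeries.coeff (r a - 1) (f ^ (c b - 1)) := by
        ext a b
        simp only [Matrix.of_apply, connC]
        rw [if_neg (by have := hc1 b; omega), coeff_X_mul_of_pos _ (hra a)]
      rw [hmat]
      refine tp_Dpow f hfPF (m' + 1) (fun a => r a - 1) (fun b => c b - 1) ?_ ?_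
      · intro x y hxy
        have h1 := hra x
        have h2 := hr hxy
        show r x - 1 < r y - 1
        omega
      · intro x y hxy
        have h1 := hc1 x
        have h2 := hc hxy
        show c x - 1 < c y - 1
        omega

lemma tp_connC (f : PowerSeries ℝ) (hfPF : PolyaFrequency f) :
    TotallyPositive (connC f) := by
  intro m r c hr hc
  cases m with
  | zero =>
    have : (Matrix.of fun (a : Fin 0) (b : Fin 0) => connC f (r a) (c b)).det = 1 :=
      Matrix.det_isEmpty
    rw [this]; norm_num
  | succ m' =>
    by_cases hc0 : c 0 = 0
    · by_cases hr0 : r 0 = 0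
      · rw [Matrix.det_succ_column_zero]
        rw [Finset.sum_eq_single 0]
        · have h00 : connC f (r 0) (c 0) = 1 := by simp [connC, hc0, hr0]
          have hsub : ((Matrix.of fun a b => connC f (r a) (c b)).submatrix
              (Fin.succAbove 0) Fin.succ)
              = Matrix.of fun a b =>
                  connC f ((r ∘ Fin.succ) a) ((c ∘ Fin.succ) b) := by
            ext a b
            simp [Fin.succAbove_zero]
          simp only [Fin.val_zero, pow_zero, one_mul, Matrix.of_apply, h00, hsub]
          refine tp_connC_pos f hfPF m' (r ∘ Fin.succ) (c ∘ Fin.succ)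
            (hr.comp Fin.strictMono_succ) (hc.comp Fin.strictMono_succ) ?_
          intro b
          have h1 : c 0 < c b.succ := hc (Fin.succ_pos b)
          show 1 ≤ c b.succ
          omega
        · intro a _ ha
          have hra : r a ≠ 0 := by
            have := hr (Fin.pos_of_ne_zero ha)
            omega
          have h0 : connC f (r a) (c 0) = 0 := by simp [connC, hc0, hra]
          simp only [Matrix.of_apply, h0]
          ring
        · intro h
          exact absurd (Finset.mem_univ _) h
      · apply le_of_eq
        symm
        apply Matrix.det_eq_zero_of_column_eq_zero 0
        intro a
        have hra : r a ≠ 0 := by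
          have : r 0 ≤ r a := hr.monotone (Fin.zero_le a)
          omega
        simp [connC, hc0, hra]
    · refine tp_connC_pos f hfPF (m' + 1) r c hr hc ?_
      intro b
      have h1 : c 0 ≤ c b := hc.monotone (Fin.zero_le b)
      omega

/-! ### The factorization of the almost-Riordan array -/

lemma almostRiordan_entry (d g f : PowerSeries ℝ) {n N : ℕ} (hnN : n < N) (k : ℕ) :
    almostRiordan d g f n k
      = ∑ j : Fin N,
          quasiRiordan d (PowerSeries.X * g) n (j : ℕ) * connC f (j : ℕ) k := by
  have hN0 : 0 < N := lt_of_le_of_lt (Nat.zero_le n) hnN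
  cases k with
  | zero =>
    rw [Finset.sum_eq_single (⟨0, hN0⟩ : Fin N)]
    · simp [almostRiordan, quasiRiordan, connC]
    · intro j _ hj
      have hjv : ((j : ℕ) : ℕ) ≠ 0 := fun h => hj (Fin.ext (by simpa using h))
      simp [connC, hjv]
    · intro h
      exact absurd (Finset.mem_univ _) h
  | succ k' =>
    have hL : almostRiordan d g f n (k' + 1)
        = PowerSeries.coeff n (PowerSeries.X * g * f ^ k') := by
      simp [almostRiordan]
    have hprod : PowerSeries.X * g * f ^ k' = g * (PowerSeries.X * f ^ k') := by ring
    rw [hL, hprod, coeff_mul_expand g (PowerSeries.X * f ^ k') hnN, Finset.sum_range]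
    refine Finset.sum_congr rfl fun j _ => ?_
    by_cases hj : (j : ℕ) = 0
    · simp [hj, connC, coeff_zero_X_mul]
    · have hj1 : 1 ≤ (j : ℕ) := Nat.one_le_iff_ne_zero.mpr hj
      have hQ : quasiRiordan d (PowerSeries.X * g) n (j : ℕ)
          = PowerSeries.coeff n (PowerSeries.X ^ (j : ℕ) * g) := by
        simp only [quasiRiordan, if_neg hj]
        rw [← mul_assoc, ← pow_succ, Nat.sub_add_cancel hj1]
      have hC : connC f (j : ℕ) (k' + 1)
          = PowerSeries.coeff (j : ℕ) (PowerSeries.X * f ^ k') := by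
        simp [connC]
      rw [hQ, hC]

theorem tp_quasiRiordan_implies_tp_almostRiordan
    (d g f : PowerSeries ℝ)
    (hg : PowerSeries.constantCoeff g ≠ 0)
    (hf0 : PowerSeries.coeff 0 f = 0)
    (hf1 : PowerSeries.coeff 1 f ≠ 0)
    (hfPF : PolyaFrequency f)
    (hTP : TotallyPositive (quasiRiordan d (PowerSeries.X * g))) :
    TotallyPositive (almostRiordan d g f) := by
  intro m r c hr hc
  cases m with
  | zero =>
    have : (Matrix.of fun (a : Fin 0) (b : Fin 0) =>
        almostRiordan d g f (r a) (c b)).det = 1 := Matrix.det_isEmpty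
    rw [this]; norm_num
  | succ m' =>
    set N := r (Fin.last m') + 1 with hN
    have hrN : ∀ a, r a < N := fun a =>
      Nat.lt_succ_of_le (hr.monotone (Fin.le_last a))
    have hmat : (Matrix.of fun a b => almostRiordan d g f (r a) (c b))
        = Matrix.of fun a b => ∑ j : Fin N,
            (fun (a : Fin (m'+1)) (j : Fin N) =>
              quasiRiordan d (PowerSeries.X * g) (r a) (j : ℕ)) a j *
            (fun (j : Fin N) (b : Fin (m'+1)) => connC f (j : ℕ) (c b)) j b := by
      ext a b
      exact almostRiordan_entry d g f (hrN a) (c b)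
    rw [hmat]
    refine det_nonneg_of_prod _ _ ?_ ?_
    · intro s hs
      exact hTP (m' + 1) r (fun b => (s b : ℕ)) hr (Fin.val_strictMono.comp hs)
    · intro s hs
      exact tp_connC f hfPF (m' + 1) (fun a => (s a : ℕ)) c
        (Fin.val_strictMono.comp hs) hc
end

section
/- The almost-Riordan array ((1+t)^2 | 1/(1-t), t) is not totally positive: its minor with rows {1,2,3} and columns {0,1,2} equals det [[2,1,0],[1,1,1],[0,1,1]] = -1 < 0, even though (1+t)^2, 1/(1-t) and t are Pólya frequency series and the Riordan array (1/(1-t), t) is totally positive. -/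
open Finset

/-- A strictly monotone permutation of `Fin k` is the identity. -/
lemma perm_strictMono_eq_one {k : ℕ} (σ : Equiv.Perm (Fin k)) (h : StrictMono σ) : σ = 1 := by
  have inst : WellFoundedLT (Fin k) := inferInstance
  have h2 : (σ : Fin k → Fin k) = (id : Fin k → Fin k) :=
    (StrictMono.range_inj h strictMono_id).1
      (by rw [Set.range_id, σ.surjective.range_eq])
  ext x
  rw [show σ x = id x from congrFun h2 x]
  rfl

/-- Determinant nonnegativity for "banded" matrices supported on `c b ≤ r a ≤ c b + 1`. -/
lemma banded_det_nonneg {k : ℕ} (r c : Fin k → ℕ) (hr : StrictMono r) (hc : StrictMono c)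
    (S : Matrix (Fin k) (Fin k) ℝ) (h0 : ∀ a b, 0 ≤ S a b)
    (hb : ∀ a b, S a b ≠ 0 → c b ≤ r a ∧ r a ≤ c b + 1) : 0 ≤ S.det := by
  rw [Matrix.det_apply']
  rw [Finset.sum_eq_single (1 : Equiv.Perm (Fin k))]
  · simp only [Equiv.Perm.sign_one, Units.val_one, Int.cast_one, one_mul, Equiv.Perm.one_apply]
    exact Finset.prod_nonneg fun i _ => h0 i i
  · intro σ _ hσ
    have hex : ∃ i, S (σ i) i = 0 := by
      by_contra hcon
      push_neg at hcon
      have hsm : StrictMono σ := by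
        intro i j hij
        obtain ⟨h1i, h2i⟩ := hb (σ i) i (hcon i)
        obtain ⟨h1j, h2j⟩ := hb (σ j) j (hcon j)
        rcases lt_trichotomy (σ i) (σ j) with hh | hh | hh
        · exact hh
        · exact absurd (σ.injective hh) hij.ne
        · exfalso
          have hcij : c i + 1 ≤ c j := hc hij
          have hle : r (σ i) ≤ r (σ j) := le_trans h2i (le_trans hcij h1j)
          exact absurd (hr hh) (not_lt.mpr hle)
      exact hσ (perm_strictMono_eq_one σ hsm)
    obtain ⟨i, hi⟩ := hex
    rw [Finset.prod_eq_zero (f := fun j => S (σ j) j) (Finset.mem_univ i) hi, mul_zero]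
  · intro h1; exact absurd (Finset.mem_univ _) h1

/-- Minors of the infinite lower-triangular all-ones matrix are nonnegative. -/
lemma lowerOnes_det_nonneg {k : ℕ} (r c : Fin k → ℕ) (hr : StrictMono r) (hc : StrictMono c) :
    0 ≤ (Matrix.of fun a b : Fin k => if c b ≤ r a then (1:ℝ) else 0).det := by
  match k with
  | 0 => simp [Matrix.det_fin_zero]
  | k + 1 =>
    by_cases h0 : c 0 ≤ r 0
    · by_cases hstep : ∀ i : ℕ, (h : i + 1 < k + 1) → ∃ b : Fin (k+1),
        r ⟨i, by omega⟩ < c b ∧ c b ≤ r ⟨i+1, h⟩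
      · -- the minor is the lower-triangular all-ones matrix
        have claim1 : ∀ i : ℕ, (h : i < k + 1) → c ⟨i, h⟩ ≤ r ⟨i, h⟩ := by
          intro i
          induction i with
          | zero => intro h; exact h0
          | succ n ih =>
            intro h
            obtain ⟨b, hb1, hb2⟩ := hstep n h
            have hbn : n < (b : ℕ) := by
              by_contra hle
              push_neg at hle
              have : c b ≤ c ⟨n, by omega⟩ := hc.monotone (by simpa [Fin.le_def] using hle)
              have := lt_of_lt_of_le hb1 (le_trans this (ih (by omega)))
              omega
            have hble : (⟨n+1, h⟩ : Fin (k+1)) ≤ b := by simpa [Fin.le_def] using hbn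
            exact le_trans (hc.monotone hble) hb2
        have claim2 : ∀ d i, (h2 : i + 2 + d = k + 1) →
            r ⟨i, by omega⟩ < c ⟨i+1, by omega⟩ := by
          intro d
          induction d with
          | zero =>
            intro i h2
            obtain ⟨b, hb1, hb2⟩ := hstep i (by omega)
            have hble : b ≤ (⟨i+1, by omega⟩ : Fin (k+1)) := by
              have := b.isLt; simp [Fin.le_def]; omega
            exact lt_of_lt_of_le hb1 (hc.monotone hble)
          | succ d ih =>
            intro i h2
            have ihh := ih (i+1) (by omega)
            obtain ⟨b, hb1, hb2⟩ := hstep i (by omega)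
            have hlt : c b < c ⟨i+1+1, by omega⟩ := lt_of_le_of_lt hb2 ihh
            have hble : b ≤ (⟨i+1, by omega⟩ : Fin (k+1)) := by
              have := hc.lt_iff_lt.mp hlt
              simp [Fin.lt_def] at this
              simp [Fin.le_def]; omega
            exact lt_of_lt_of_le hb1 (hc.monotone hble)
        have hM : (Matrix.of fun a b : Fin (k+1) => if c b ≤ r a then (1:ℝ) else 0)
            = Matrix.of fun a b : Fin (k+1) => if b ≤ a then (1:ℝ) else 0 := by
          ext a b
          simp only [Matrix.of_apply]
          rcases le_or_gt b a with hba | hab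
          · rw [if_pos hba, if_pos]
            calc c b ≤ c a := hc.monotone hba
            _ = c ⟨a.1, a.isLt⟩ := by rw [Fin.eta]
            _ ≤ r ⟨a.1, a.isLt⟩ := claim1 a.1 a.isLt
            _ = r a := by rw [Fin.eta]
          · have h1 : a.1 + 1 < k + 1 := by have := b.isLt; have := hab; omega
            have h2 : r a < c ⟨a.1+1, h1⟩ := by
              have := claim2 (k + 1 - (a.1 + 2)) a.1 (by omega)
              simpa [Fin.eta] using this
            have h3 : r a < c b := by
              refine lt_of_lt_of_le h2 (hc.monotone ?_)
              simp only [Fin.le_def]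
              exact hab
            rw [if_neg (not_le.mpr h3), if_neg (not_le.mpr hab)]
        rw [hM]
        have htr : ((Matrix.of fun a b : Fin (k+1) => if b ≤ a then (1:ℝ) else 0)).det = 1 := by
          rw [Matrix.det_of_lowerTriangular]
          · simp
          · intro i j hij
            simp only [Matrix.of_apply]
            rw [if_neg]
            exact not_le.mpr (by simpa using hij)
        rw [htr]; norm_num
      · push_neg at hstep
        obtain ⟨i, hi, hno⟩ := hstep
        have heq : (Matrix.of fun a b : Fin (k+1) => if c b ≤ r a then (1:ℝ) else 0) ⟨i, by omega⟩
            = (Matrix.of fun a b : Fin (k+1) => if c b ≤ r a then (1:ℝ) else 0) ⟨i+1, hi⟩ := by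
          funext b
          simp only [Matrix.of_apply]
          by_cases hcb : c b ≤ r ⟨i, by omega⟩
          · rw [if_pos hcb, if_pos (le_trans hcb (hr.monotone (by simp [Fin.le_def])))]
          · rw [if_neg hcb, if_neg]
            intro hcb2
            exact hcb (by have := hno b; omega)
        rw [Matrix.det_zero_of_row_eq (by simp [Fin.ext_iff] : (⟨i, by omega⟩ : Fin (k+1)) ≠ ⟨i+1, hi⟩) heq]
    · rw [Matrix.det_eq_zero_of_row_eq_zero 0]
      intro j
      simp only [Matrix.of_apply]
      rw [if_neg]
      intro hcj
      exact h0 (le_trans (hc.monotone (Fin.zero_le j)) hcj)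

lemma det_mul_nonneg_of_minors {k N : ℕ}
    (P : Matrix (Fin k) (Fin N) ℝ) (Q : Matrix (Fin N) (Fin k) ℝ)
    (hP : ∀ g : Fin k → Fin N, StrictMono g → 0 ≤ (P.submatrix id g).det)
    (hQ : ∀ g : Fin k → Fin N, StrictMono g → 0 ≤ (Q.submatrix g id).det) :
    0 ≤ (P * Q).det := by
  classical
  have step1 : (P * Q).det
      = ∑ f : Fin k → Fin N, (∏ a, P a (f a)) * (Q.submatrix f id).det := by
    have hrow : (P * Q) = Matrix.of fun a => ∑ m, P a m • Q m := by
      ext a b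
      simp [Matrix.mul_apply, Finset.sum_apply]
    rw [hrow]
    calc (Matrix.of fun a => ∑ m, P a m • Q m).det
        = (Matrix.detRowAlternating (R := ℝ) (n := Fin k)).toMultilinearMap
            (fun a => ∑ m, P a m • Q m) := rfl
      _ = ∑ f : Fin k → Fin N, (Matrix.detRowAlternating (R := ℝ) (n := Fin k)).toMultilinearMap
            (fun a => P a (f a) • Q (f a)) := by
          rw [(Matrix.detRowAlternating (R := ℝ) (n := Fin k)).toMultilinearMap.map_sum
            (g := fun a m => P a m • Q m)]
      _ = ∑ f : Fin k → Fin N, (∏ a, P a (f a)) * (Q.submatrix f id).det := by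
          apply Finset.sum_congr rfl
          intro f _
          have h2 := (Matrix.detRowAlternating (R := ℝ) (n := Fin k)).toMultilinearMap.map_smul_univ
            (fun a => P a (f a)) (fun a => Q (f a))
          rw [h2, smul_eq_mul]
          rfl
  have hzero : ∀ f : Fin k → Fin N, ¬ Function.Injective f →
      (∏ a, P a (f a)) * (Q.submatrix f id).det = 0 := by
    intro f hf
    simp only [Function.Injective, not_forall] at hf
    obtain ⟨a, b, hab, hne⟩ := hf
    have hQ0 : (Q.submatrix f id).det = 0 :=
      Matrix.det_zero_of_row_eq hne (by funext j; simp [Matrix.submatrix_apply, hab])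
    rw [hQ0, mul_zero]
  have hfilter : ∑ f : Fin k → Fin N, (∏ a, P a (f a)) * (Q.submatrix f id).det
      = ∑ f ∈ univ.filter (fun f : Fin k → Fin N => Function.Injective f),
          (∏ a, P a (f a)) * (Q.submatrix f id).det := by
    rw [Finset.sum_filter_of_ne]
    intro f _ hTf
    by_contra hinj
    exact hTf (hzero f hinj)
  have hbij : ∑ f ∈ univ.filter (fun f : Fin k → Fin N => Function.Injective f),
          (∏ a, P a (f a)) * (Q.submatrix f id).det
      = ∑ p ∈ (univ.filter (fun g : Fin k → Fin N => StrictMono g)) ×ˢ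
            (univ : Finset (Equiv.Perm (Fin k))),
          (∏ a, P a ((p.1 ∘ p.2) a)) * (Q.submatrix (p.1 ∘ p.2) id).det := by
    apply Finset.sum_nbij' (i := fun f => (f ∘ Tuple.sort f, (Tuple.sort f)⁻¹))
      (j := fun p => p.1 ∘ p.2)
    · intro f hfs
      simp only [Finset.mem_filter, Finset.mem_univ, true_and] at hfs
      simp only [Finset.mem_product, Finset.mem_filter, Finset.mem_univ, true_and]
      exact ⟨(Tuple.monotone_sort f).strictMono_of_injective
        (hfs.comp (Tuple.sort f).injective), trivial⟩
    · intro p hps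
      simp only [Finset.mem_product, Finset.mem_filter, Finset.mem_univ, true_and] at hps
      simp only [Finset.mem_filter, Finset.mem_univ, true_and]
      exact hps.1.injective.comp p.2.injective
    · intro f _
      funext x
      simp
    · intro p hps
      simp only [Finset.mem_product, Finset.mem_filter, Finset.mem_univ, true_and] at hps
      obtain ⟨g, σ⟩ := p
      have hg : StrictMono g := hps.1
      have hinj : Function.Injective (g ∘ σ) := hg.injective.comp σ.injective
      have hmono1 : Monotone ((g ∘ σ) ∘ (σ⁻¹ : Equiv.Perm (Fin k))) := by
        have hco : (g ∘ σ) ∘ (σ⁻¹ : Equiv.Perm (Fin k)) = g := by funext x; simp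
        rw [hco]; exact hg.monotone
      have hmono2 : Monotone ((g ∘ σ) ∘ Tuple.sort (g ∘ σ)) := Tuple.monotone_sort _
      have huniq := Tuple.unique_monotone hmono1 hmono2
      have hperm : (σ⁻¹ : Equiv.Perm (Fin k)) = Tuple.sort (g ∘ σ) := by
        ext x
        exact congrArg Fin.val (hinj (congrFun huniq x))
      have h1 : (g ∘ σ) ∘ Tuple.sort (g ∘ σ) = g := by
        rw [← hperm]; funext x; simp
      have h2 : (Tuple.sort (g ∘ σ))⁻¹ = σ := by rw [← hperm, inv_inv]
      simp only [Prod.mk.injEq]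
      exact ⟨h1, h2⟩
    · intro f hfs
      have hco : (f ∘ Tuple.sort f) ∘ ((Tuple.sort f)⁻¹ : Equiv.Perm (Fin k)) = f := by
        funext x; simp
      rw [hco]
  rw [step1, hfilter, hbij, Finset.sum_product]
  apply Finset.sum_nonneg
  intro g hgs
  simp only [Finset.mem_filter, Finset.mem_univ, true_and] at hgs
  have hinner : ∑ σ : Equiv.Perm (Fin k),
      (∏ a, P a ((g ∘ σ) a)) * (Q.submatrix (g ∘ σ) id).det
      = (P.submatrix id g).det * (Q.submatrix g id).det := by
    have hterm : ∀ σ : Equiv.Perm (Fin k),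
        (∏ a, P a ((g ∘ σ) a)) * (Q.submatrix (g ∘ σ) id).det
        = (((Equiv.Perm.sign σ : ℤ) : ℝ) * ∏ a, P a (g (σ a))) * (Q.submatrix g id).det := by
      intro σ
      have hsub : (Q.submatrix (g ∘ σ) id) = (Q.submatrix g id).submatrix σ id := rfl
      rw [hsub, Matrix.det_permute]
      simp only [Function.comp_apply]
      ring
    rw [Finset.sum_congr rfl (fun σ _ => hterm σ), ← Finset.sum_mul]
    congr 1
    rw [← Matrix.det_transpose (P.submatrix id g), Matrix.det_apply']
    apply Finset.sum_congr rfl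
    intro σ _
    rfl
  rw [hinner]
  exact mul_nonneg (hP g hgs) (hQ g hgs)

lemma inv_one_sub_X : ((1 - PowerSeries.X)⁻¹ : PowerSeries ℝ) = PowerSeries.mk fun _ => (1:ℝ) := by
  rw [PowerSeries.inv_eq_iff_mul_eq_one (by simp)]
  ext n
  rw [mul_sub, mul_one]
  cases n with
  | zero => simp
  | succ m =>
    simp [PowerSeries.coeff_succ_mul_X, PowerSeries.coeff_mk, PowerSeries.coeff_one]

lemma coeff_one_add_X_sq (n : ℕ) : PowerSeries.coeff n ((1 + PowerSeries.X) ^ 2 : PowerSeries ℝ)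
    = if n = 0 then 1 else if n = 1 then 2 else if n = 2 then 1 else 0 := by
  have hexp : ((1 + PowerSeries.X) ^ 2 : PowerSeries ℝ)
      = 1 + PowerSeries.C 2 * PowerSeries.X + PowerSeries.X ^ 2 := by
    have h2 : (PowerSeries.C (R := ℝ)) 2 = 2 := by
      simp [map_ofNat]
    rw [h2]; ring
  rw [hexp]
  simp only [map_add, PowerSeries.coeff_one, PowerSeries.coeff_C_mul, PowerSeries.coeff_X,
    PowerSeries.coeff_X_pow]
  rcases n with _ | _ | _ | n <;> norm_num

/-- The bidiagonal 0/1 Toeplitz entry. -/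
noncomputable def w1 (i j : ℕ) : ℝ := if j ≤ i ∧ i ≤ j + 1 then 1 else 0

lemma w1_nonneg (i j : ℕ) : 0 ≤ w1 i j := by unfold w1; split_ifs <;> norm_num

lemma sum_w1 {N : ℕ} (i j : ℕ) (hi : i < N) :
    ∑ m ∈ Finset.range N, w1 i m * w1 m j = w1 i j + w1 i (j+1) := by
  have hpt : ∀ m, w1 i m * w1 m j
      = (if m = j then w1 i j else 0) + (if m = j + 1 then w1 i (j+1) else 0) := by
    intro m
    rcases eq_or_ne m j with rfl | h1
    · rw [if_pos rfl, if_neg (by omega), add_zero]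
      have hm : w1 m m = 1 := by unfold w1; rw [if_pos ⟨le_refl _, by omega⟩]
      rw [hm, mul_one]
    · rcases eq_or_ne m (j+1) with rfl | h2
      · rw [if_neg h1, if_pos rfl, zero_add]
        have hm : w1 (j+1) j = 1 := by unfold w1; rw [if_pos ⟨by omega, by omega⟩]
        rw [hm, mul_one]
      · rw [if_neg h1, if_neg h2]
        have hm : w1 m j = 0 := by unfold w1; rw [if_neg (by omega)]
        rw [hm, mul_zero]
        norm_num
  rw [Finset.sum_congr rfl (fun m _ => hpt m), Finset.sum_add_distrib]
  have e1 : ∑ m ∈ Finset.range N, (if m = j then w1 i j else 0)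
      = if j ∈ Finset.range N then w1 i j else 0 := Finset.sum_ite_eq' _ _ _
  have e2 : ∑ m ∈ Finset.range N, (if m = j + 1 then w1 i (j+1) else 0)
      = if j + 1 ∈ Finset.range N then w1 i (j+1) else 0 := Finset.sum_ite_eq' _ _ _
  rw [e1, e2]
  congr 1
  · split_ifs with h
    · rfl
    · unfold w1
      rw [if_neg (by simp only [Finset.mem_range] at h; omega)]
  · split_ifs with h
    · rfl
    · unfold w1
      rw [if_neg (by simp only [Finset.mem_range] at h; omega)]

lemma sqToeplitz_det_nonneg {k : ℕ} (r c : Fin k → ℕ) (hr : StrictMono r) (hc : StrictMono c) :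
    0 ≤ (Matrix.of fun a b : Fin k => w1 (r a) (c b) + w1 (r a) (c b + 1)).det := by
  match k with
  | 0 => simp [Matrix.det_fin_zero]
  | k + 1 =>
    set N := r (Fin.last k) + 1 with hN
    have hrN : ∀ a, r a < N := fun a => by
      have : r a ≤ r (Fin.last k) := hr.monotone (Fin.le_last a)
      omega
    have hfact : (Matrix.of fun a b : Fin (k+1) => w1 (r a) (c b) + w1 (r a) (c b + 1))
        = (Matrix.of fun (a : Fin (k+1)) (m : Fin N) => w1 (r a) m)
          * (Matrix.of fun (m : Fin N) (b : Fin (k+1)) => w1 m (c b)) := by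
      ext a b
      rw [Matrix.mul_apply]
      simp only [Matrix.of_apply]
      rw [show ∑ m : Fin N, w1 (r a) (m : ℕ) * w1 (m : ℕ) (c b)
          = ∑ m ∈ Finset.range N, w1 (r a) m * w1 m (c b) from
        Fin.sum_univ_eq_sum_range (fun m => w1 (r a) m * w1 m (c b)) N]
      rw [sum_w1 _ _ (hrN a)]
    rw [hfact]
    apply det_mul_nonneg_of_minors
    · intro g hg
      apply banded_det_nonneg r (fun b => (g b : ℕ)) hr (fun x y hxy => hg hxy)
      · intro a b
        exact w1_nonneg _ _
      · intro a b hab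
        simp only [Matrix.submatrix_apply, Matrix.of_apply, id] at hab
        by_contra hcon
        apply hab
        unfold w1
        rw [if_neg hcon]
    · intro g hg
      apply banded_det_nonneg (fun a => (g a : ℕ)) c (fun x y hxy => hg hxy) hc
      · intro a b
        exact w1_nonneg _ _
      · intro a b hab
        simp only [Matrix.submatrix_apply, Matrix.of_apply, id] at hab
        by_contra hcon
        apply hab
        unfold w1
        rw [if_neg hcon]

lemma toeplitz_sq_entry (i j : ℕ) :
    (if j ≤ i then PowerSeries.coeff (i - j) ((1 + PowerSeries.X)^2) else 0)
      = w1 i j + w1 i (j+1) := by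
  unfold w1
  by_cases h : j ≤ i
  · rw [if_pos h, coeff_one_add_X_sq]
    split_ifs
    all_goals (try (exfalso; omega))
    all_goals norm_num
  · rw [if_neg h, if_neg (by omega), if_neg (by omega)]
    norm_num

lemma riordan_entry (n k : ℕ) :
    riordan (1 - PowerSeries.X)⁻¹ PowerSeries.X n k = if k ≤ n then 1 else 0 := by
  unfold riordan
  rw [inv_one_sub_X, PowerSeries.coeff_mul_X_pow']
  split_ifs with h
  · simp
  · rfl

lemma aR_entry_s7 (n k : ℕ) (hk : k ≠ 0) :
    almostRiordan ((1 + PowerSeries.X)^2) (1 - PowerSeries.X)⁻¹ PowerSeries.X n k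
      = if k ≤ n then 1 else 0 := by
  unfold almostRiordan
  rw [if_neg hk, inv_one_sub_X]
  have hX : PowerSeries.X * PowerSeries.mk (fun _ => (1:ℝ)) * PowerSeries.X^(k-1)
      = PowerSeries.mk (fun _ => (1:ℝ)) * PowerSeries.X^k := by
    conv_rhs => rw [show k = 1 + (k-1) by omega]
    rw [pow_add, pow_one]
    ring
  rw [hX, PowerSeries.coeff_mul_X_pow']
  split_ifs with h
  · simp
  · rfl

lemma aR_entry0 (n : ℕ) :
    almostRiordan ((1 + PowerSeries.X)^2) (1 - PowerSeries.X)⁻¹ PowerSeries.X n 0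
      = PowerSeries.coeff n ((1 + PowerSeries.X)^2) := if_pos rfl

theorem almostRiordan_counterexample :
    PolyaFrequency ((1 + PowerSeries.X) ^ 2 : PowerSeries ℝ) ∧
    PolyaFrequency ((1 - PowerSeries.X)⁻¹ : PowerSeries ℝ) ∧
    PolyaFrequency (PowerSeries.X : PowerSeries ℝ) ∧
    TotallyPositive (riordan (1 - PowerSeries.X)⁻¹ PowerSeries.X) ∧
    (Matrix.of fun a b : Fin 3 =>
        almostRiordan ((1 + PowerSeries.X) ^ 2) (1 - PowerSeries.X)⁻¹ PowerSeries.X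
          (![1, 2, 3] a) (![0, 1, 2] b)).det = -1 ∧
    ¬ TotallyPositive
        (almostRiordan ((1 + PowerSeries.X) ^ 2) (1 - PowerSeries.X)⁻¹ PowerSeries.X) := by
  have hdet : (Matrix.of fun a b : Fin 3 =>
      almostRiordan ((1 + PowerSeries.X) ^ 2) (1 - PowerSeries.X)⁻¹ PowerSeries.X
        (![1, 2, 3] a) (![0, 1, 2] b)).det = -1 := by
    rw [Matrix.det_fin_three]
    simp only [Matrix.of_apply, Matrix.cons_val', Matrix.cons_val_zero, Matrix.cons_val_one,
      Matrix.head_cons, Matrix.cons_val_two, Matrix.tail_cons, Matrix.empty_val',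
      Matrix.cons_val_fin_one, Matrix.head_fin_const]
    rw [aR_entry0 1, aR_entry0 2, aR_entry0 3, coeff_one_add_X_sq, coeff_one_add_X_sq,
      coeff_one_add_X_sq, aR_entry_s7 1 1 one_ne_zero, aR_entry_s7 2 1 one_ne_zero,
      aR_entry_s7 3 1 one_ne_zero, aR_entry_s7 1 2 two_ne_zero, aR_entry_s7 2 2 two_ne_zero,
      aR_entry_s7 3 2 two_ne_zero]
    norm_num
  refine ⟨?_, ?_, ?_, ?_, hdet, ?_⟩
  · -- PF (1+X)^2
    intro k r c hr hc
    have hM : (Matrix.of fun a b : Fin k =>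
        (fun i j => if j ≤ i then PowerSeries.coeff (i - j) ((1 + PowerSeries.X)^2) else 0)
          (r a) (c b))
        = Matrix.of fun a b : Fin k => w1 (r a) (c b) + w1 (r a) (c b + 1) := by
      ext a b
      exact toeplitz_sq_entry (r a) (c b)
    rw [hM]
    exact sqToeplitz_det_nonneg r c hr hc
  · -- PF (1-X)⁻¹
    intro k r c hr hc
    have hM : (Matrix.of fun a b : Fin k =>
        (fun i j => if j ≤ i then PowerSeries.coeff (i - j) ((1 - PowerSeries.X)⁻¹) else 0)
          (r a) (c b))
        = Matrix.of fun a b : Fin k => if c b ≤ r a then (1:ℝ) else 0 := by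
      ext a b
      simp only [Matrix.of_apply, inv_one_sub_X, PowerSeries.coeff_mk]
    rw [hM]
    exact lowerOnes_det_nonneg r c hr hc
  · -- PF X
    intro k r c hr hc
    apply banded_det_nonneg r c hr hc
    · intro a b
      simp only [Matrix.of_apply]
      split_ifs <;> simp [PowerSeries.coeff_X] <;> split_ifs <;> norm_num
    · intro a b hab
      simp only [Matrix.of_apply] at hab
      by_cases h1 : c b ≤ r a
      · rw [if_pos h1, PowerSeries.coeff_X] at hab
        refine ⟨h1, ?_⟩
        by_cases h2 : r a - c b = 1
        · omega
        · rw [if_neg h2] at hab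
          exact absurd rfl hab
      · rw [if_neg h1] at hab
        exact absurd rfl hab
  · -- riordan TP
    intro k r c hr hc
    have hM : (Matrix.of fun a b : Fin k =>
        riordan (1 - PowerSeries.X)⁻¹ PowerSeries.X (r a) (c b))
        = Matrix.of fun a b : Fin k => if c b ≤ r a then (1:ℝ) else 0 := by
      ext a b
      exact riordan_entry (r a) (c b)
    rw [hM]
    exact lowerOnes_det_nonneg r c hr hc
  · -- not TP
    intro hTP
    have h3 := hTP 3 ![1, 2, 3] ![0, 1, 2] (by decide) (by decide)
    rw [hdet] at h3
    norm_num at h3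
end

section
/- Let M = (d | g, f) be an almost-Riordan array with d_0 > 0, g_0 > 0 and f_1 > 0, and let J be an infinite matrix of production-matrix form, i.e., J(n,0) = w_n, J(n,1) = z_n for all n ≥ 0, and J(n,k) = a_{n-k+1} for k ≥ 2 and n ≥ k-1 (with J(n,k) = 0 for k ≥ 2 and n < k-1), for some real sequences (w_n), (z_n), (a_n). Suppose M·J equals M with its first row deleted, i.e., for all n, k: Σ_{j=0}^{n} M(n,j)·J(j,k) = M(n+1,k). If J is totally positive, then both M = (d | g, f) and the Riordan array (g, f) are totally positive. -/
open Finset Matrix Equiv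


lemma cb_expand {k n : ℕ} (A : Matrix (Fin k) (Fin n) ℝ) (B : Matrix (Fin n) (Fin k) ℝ) :
    (A * B).det = ∑ p : Fin k → Fin n, (A.submatrix id p).det * ∏ i, B (p i) i := by
  calc
    (A * B).det = ∑ p : Fin k → Fin n, ∑ σ : Equiv.Perm (Fin k),
        Equiv.Perm.sign σ * ∏ i, A (σ i) (p i) * B (p i) i := by
      simp only [det_apply', mul_apply, prod_univ_sum, mul_sum, Fintype.piFinset_univ]
      rw [Finset.sum_comm]
    _ = _ := by
      refine Finset.sum_congr rfl fun p _ => ?_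
      rw [det_apply', Finset.sum_mul]
      refine Finset.sum_congr rfl fun σ _ => ?_
      rw [Finset.prod_mul_distrib, mul_assoc]
      simp [Matrix.submatrix_apply]

lemma det_mul_nonneg_of_minors_s9 {k n : ℕ} (A : Matrix (Fin k) (Fin n) ℝ)
    (B : Matrix (Fin n) (Fin k) ℝ)
    (hA : ∀ p : Fin k → Fin n, StrictMono p → 0 ≤ (A.submatrix id p).det)
    (hB : ∀ p : Fin k → Fin n, StrictMono p → 0 ≤ (B.submatrix p id).det) :
    0 ≤ (A * B).det := by
  classical
  rw [cb_expand]
  set T : (Fin k → Fin n) → ℝ := fun p => (A.submatrix id p).det * ∏ i, B (p i) i with hT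
  have h1 : ∑ p : Fin k → Fin n, T p
      = ∑ p ∈ Finset.univ.filter (fun p : Fin k → Fin n => Function.Injective p), T p := by
    symm
    apply Finset.sum_subset (Finset.filter_subset _ _)
    intro p _ hp
    simp only [Finset.mem_filter, Finset.mem_univ, true_and] at hp
    obtain ⟨i, j, hij, hne⟩ := Function.not_injective_iff.mp hp
    rw [hT]
    simp only
    rw [Matrix.det_zero_of_column_eq hne (fun x => by simp [hij]), zero_mul]
  let e : {f : Fin k → Fin n // StrictMono f} × Equiv.Perm (Fin k) →
      {p : Fin k → Fin n // Function.Injective p} :=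
    fun x => ⟨x.1.1 ∘ x.2, x.1.2.injective.comp x.2.injective⟩
  have hbij : Function.Bijective e := by
    constructor
    · rintro ⟨⟨f, hf⟩, σ⟩ ⟨⟨f', hf'⟩, σ'⟩ h
      simp only [e, Subtype.mk.injEq] at h
      have hff' : f = f' := by
        have him : Finset.univ.image f = Finset.univ.image f' := by
          have h1 : Finset.univ.image (f ∘ σ) = Finset.univ.image f := by
            rw [← Finset.image_image, Finset.image_univ_of_surjective σ.surjective]
          have h2 : Finset.univ.image (f' ∘ σ') = Finset.univ.image f' := by
            rw [← Finset.image_image, Finset.image_univ_of_surjective σ'.surjective]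
          rw [← h1, ← h2, h]
        have hcard : (Finset.univ.image f).card = k := by
          rw [Finset.card_image_of_injective _ hf.injective, Finset.card_univ, Fintype.card_fin]
        have e1 := Finset.orderEmbOfFin_unique hcard
          (fun x => Finset.mem_image_of_mem _ (Finset.mem_univ x)) hf
        have e2 := Finset.orderEmbOfFin_unique hcard
          (f := f') (fun x => him ▸ Finset.mem_image_of_mem _ (Finset.mem_univ x)) hf'
        exact e1.trans e2.symm
      subst hff'
      have hσ : σ = σ' := Equiv.ext fun i => hf.injective (congrFun h i)
      simp [hσ]
    · rintro ⟨p, hp⟩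
      set s : Finset (Fin n) := Finset.univ.image p with hs
      have hcard : s.card = k := by
        rw [hs, Finset.card_image_of_injective _ hp, Finset.card_univ, Fintype.card_fin]
      have hmem : ∀ i, p i ∈ s := fun i => Finset.mem_image_of_mem _ (Finset.mem_univ i)
      let σ : Fin k → Fin k := fun i => (s.orderIsoOfFin hcard).symm ⟨p i, hmem i⟩
      have hσinj : Function.Injective σ := by
        intro i j hσij
        have := (s.orderIsoOfFin hcard).symm.injective hσij
        exact hp (Subtype.ext_iff.mp this)
      have hσbij : Function.Bijective σ := hσinj.bijective_of_finite
      refine ⟨⟨⟨s.orderEmbOfFin hcard, (s.orderEmbOfFin hcard).strictMono⟩,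
        Equiv.ofBijective σ hσbij⟩, ?_⟩
      simp only [e, Subtype.mk.injEq]
      funext i
      show s.orderEmbOfFin hcard (σ i) = p i
      rw [← Finset.coe_orderIsoOfFin_apply]
      simp [σ]
  have h2 : ∑ p ∈ Finset.univ.filter (fun p : Fin k → Fin n => Function.Injective p), T p
      = ∑ q : {p : Fin k → Fin n // Function.Injective p}, T q.1 :=
    Finset.sum_subtype _ (by simp) _
  have h3 : ∑ q : {p : Fin k → Fin n // Function.Injective p}, T q.1
      = ∑ x : {f : Fin k → Fin n // StrictMono f} × Equiv.Perm (Fin k), T (e x).1 :=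
    (Fintype.sum_bijective e hbij _ _ fun x => rfl).symm
  rw [h1, h2, h3, Fintype.sum_prod_type]
  refine Finset.sum_nonneg fun f _ => ?_
  have hsum : ∑ σ : Equiv.Perm (Fin k), T (e (f, σ)).1
      = (A.submatrix id f.1).det * (B.submatrix f.1 id).det := by
    rw [det_apply' (B.submatrix f.1 id), Finset.mul_sum]
    refine Finset.sum_congr rfl fun σ _ => ?_
    have he : (e (f, σ)).1 = f.1 ∘ σ := rfl
    rw [hT, he]
    simp only
    have hsub : A.submatrix id (f.1 ∘ σ) = (A.submatrix id f.1).submatrix id σ := rfl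
    rw [hsub, Matrix.det_permute']
    simp only [Matrix.submatrix_apply, id_eq, Function.comp_apply]
    ring
  rw [hsum]
  exact mul_nonneg (hA f.1 f.2) (hB f.1 f.2)


lemma aR_tri (d g f : PowerSeries ℝ) (hf0 : PowerSeries.coeff 0 f = 0) :
    ∀ n k : ℕ, n < k → almostRiordan d g f n k = 0 := by
  intro n k hnk
  have hk : k ≠ 0 := by omega
  unfold almostRiordan
  rw [if_neg hk]
  have hXf : (PowerSeries.X : PowerSeries ℝ) ∣ f :=
    PowerSeries.X_dvd_iff.mpr (by rwa [← PowerSeries.coeff_zero_eq_constantCoeff_apply])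
  have hdvd : (PowerSeries.X : PowerSeries ℝ) ^ k ∣ PowerSeries.X * g * f ^ (k - 1) := by
    have h1 : (PowerSeries.X : PowerSeries ℝ) ^ (k - 1) ∣ g * f ^ (k - 1) :=
      (pow_dvd_pow_of_dvd hXf (k - 1)).mul_left g
    have hk' : k = (k - 1) + 1 := by omega
    rw [hk', pow_succ', mul_assoc]
    exact mul_dvd_mul_left _ h1
  exact PowerSeries.X_pow_dvd_iff.mp hdvd n hnk

lemma aR_riordan (d g f : PowerSeries ℝ) (n k : ℕ) :
    almostRiordan d g f (n + 1) (k + 1) = riordan g f n k := by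
  unfold almostRiordan riordan
  rw [if_neg (Nat.succ_ne_zero k)]
  simp only [Nat.add_sub_cancel]
  rw [mul_assoc, PowerSeries.coeff_succ_X_mul]

lemma aR_TP (d g f : PowerSeries ℝ)
    (hd0 : 0 < PowerSeries.coeff 0 d)
    (hf0 : PowerSeries.coeff 0 f = 0)
    (J : ℕ → ℕ → ℝ)
    (hprod : ∀ n k, ∑ j ∈ Finset.range (n + 1), almostRiordan d g f n j * J j k
        = almostRiordan d g f (n + 1) k)
    (hJTP : TotallyPositive J) :
    TotallyPositive (almostRiordan d g f) := by
  set M := almostRiordan d g f with hM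
  have tri : ∀ n k : ℕ, n < k → M n k = 0 := aR_tri d g f hf0
  have hM00 : ∀ c0 : ℕ, 0 ≤ M 0 c0 := by
    intro c0
    by_cases hc0 : c0 = 0
    · subst hc0
      simpa [hM, almostRiordan] using hd0.le
    · rw [tri 0 c0 (by omega)]
  have hext : ∀ (N n : ℕ), n ≤ N → ∀ k,
      ∑ j ∈ Finset.range (N + 1), M n j * J j k = M (n + 1) k := by
    intro N n hn k
    rw [← hprod n k]
    symm
    apply Finset.sum_subset
    · intro x hx; simp only [Finset.mem_range] at *; omega
    · intro x _ hx
      simp only [Finset.mem_range, not_lt] at hx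
      rw [tri n x (by omega), zero_mul]
  have P : ∀ (N k : ℕ) (r c : Fin k → ℕ), StrictMono r → StrictMono c →
      (∀ i, r i ≤ N) → 0 ≤ (Matrix.of fun a b => M (r a) (c b)).det := by
    intro N
    induction N with
    | zero =>
      intro k r c hr hc hb
      match k, r, c, hr, hc, hb with
      | 0, r, c, hr, hc, hb => simp [Matrix.det_isEmpty]
      | 1, r, c, hr, hc, hb =>
        rw [Matrix.det_fin_one]
        have hr0 : r 0 = 0 := Nat.le_zero.mp (hb 0)
        rw [Matrix.of_apply, hr0]
        exact hM00 (c 0)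
      | (k+2), r, c, hr, hc, hb =>
        have h01 := hr (show (0 : Fin (k+2)) < 1 by simp [Fin.lt_def])
        have := hb 0; have := hb 1
        omega
    | succ N IH =>
      have STEP : ∀ (k : ℕ) (r c : Fin k → ℕ), StrictMono r → StrictMono c →
          (∀ i, 1 ≤ r i) → (∀ i, r i ≤ N + 1) →
          0 ≤ (Matrix.of fun a b => M (r a) (c b)).det := by
        intro k r c hr hc hr1 hb
        set s : Fin k → ℕ := fun i => r i - 1 with hs
        have hsmono : StrictMono s := by
          intro i j hij
          have := hr hij; have := hr1 i; have := hr1 j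
          simp only [hs]; omega
        have hsN : ∀ i, s i ≤ N := fun i => by
          have := hb i; have := hr1 i; simp only [hs]; omega
        set A : Matrix (Fin k) (Fin (N+1)) ℝ := Matrix.of fun i j => M (s i) (j : ℕ) with hA
        set B : Matrix (Fin (N+1)) (Fin k) ℝ := Matrix.of fun j b => J (j : ℕ) (c b) with hB
        have hAB : (Matrix.of fun a b => M (r a) (c b)) = A * B := by
          ext a b
          rw [Matrix.of_apply, Matrix.mul_apply]
          have h1 : ∑ j : Fin (N+1), A a j * B j b
              = ∑ j ∈ Finset.range (N+1), M (s a) j * J j (c b) :=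
            Fin.sum_univ_eq_sum_range (fun j => M (s a) j * J j (c b)) (N+1)
          rw [h1, hext N (s a) (hsN a) (c b)]
          congr 1
          have := hr1 a
          simp only [hs]; omega
        rw [hAB]
        apply det_mul_nonneg_of_minors_s9
        · intro p hp
          exact IH k s (fun b => (p b : ℕ)) hsmono
            (fun i j hij => by exact_mod_cast hp hij) hsN
        · intro p hp
          exact hJTP k (fun a => (p a : ℕ)) c (fun i j hij => by exact_mod_cast hp hij) hc
      intro k r c hr hc hb
      match k, r, c, hr, hc, hb with
      | 0, r, c, hr, hc, hb => simp [Matrix.det_isEmpty]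
      | (m+1), r, c, hr, hc, hb =>
        by_cases hr0 : r 0 = 0
        · rw [Matrix.det_succ_row_zero]
          rw [Finset.sum_eq_single 0]
          · simp only [Fin.val_zero, pow_zero, one_mul, Fin.succAbove_zero, Matrix.of_apply, hr0]
            apply mul_nonneg (hM00 (c 0))
            exact STEP m (fun a => r a.succ) (fun b => c b.succ)
              (fun i j hij => hr (Fin.succ_lt_succ_iff.mpr hij))
              (fun i j hij => hc (Fin.succ_lt_succ_iff.mpr hij))
              (fun i => by have h := hr (Fin.succ_pos i); rw [hr0] at h; exact h)
              (fun i => hb i.succ)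
          · intro j _ hj
            have hcj : 0 < c j := by
              have := hc (Fin.pos_of_ne_zero hj)
              omega
            rw [Matrix.of_apply, hr0, tri 0 (c j) hcj, mul_zero, zero_mul]
          · intro h
            exact absurd (Finset.mem_univ 0) h
        · apply STEP (m+1) r c hr hc
          · intro i
            have h0 : 1 ≤ r 0 := by omega
            exact le_trans h0 (hr.monotone (Fin.zero_le i))
          · exact hb
  intro k r c hr hc
  exact P (Finset.univ.sup r) k r c hr hc (fun i => Finset.le_sup (Finset.mem_univ i))

theorem tp_production_matrix_implies_tp
    (d g f : PowerSeries ℝ)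
    (hd0 : 0 < PowerSeries.coeff 0 d)
    (hg0 : 0 < PowerSeries.constantCoeff g)
    (hf0 : PowerSeries.coeff 0 f = 0)
    (hf1 : 0 < PowerSeries.coeff 1 f)
    (J : ℕ → ℕ → ℝ) (w z a : ℕ → ℝ)
    (hJ0 : ∀ n, J n 0 = w n)
    (hJ1 : ∀ n, J n 1 = z n)
    (hJ2 : ∀ n k, 2 ≤ k → k - 1 ≤ n → J n k = a (n + 1 - k))
    (hJ2' : ∀ n k, 2 ≤ k → n < k - 1 → J n k = 0)
    (hprod : ∀ n k,
      ∑ j ∈ Finset.range (n + 1), almostRiordan d g f n j * J j k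
        = almostRiordan d g f (n + 1) k)
    (hJTP : TotallyPositive J) :
    TotallyPositive (almostRiordan d g f) ∧ TotallyPositive (riordan g f) := by
  have hTP : TotallyPositive (almostRiordan d g f) := aR_TP d g f hd0 hf0 J hprod hJTP
  refine ⟨hTP, ?_⟩
  intro k r c hr hc
  have h := hTP k (fun i => r i + 1) (fun i => c i + 1)
    (fun i j hij => by simp only []; have := hr hij; omega)
    (fun i j hij => by simp only []; have := hc hij; omega)
  have heq : (Matrix.of fun a b => riordan g f (r a) (c b))
      = Matrix.of fun a b => almostRiordan d g f (r a + 1) (c b + 1) := by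
    ext a b
    rw [Matrix.of_apply, Matrix.of_apply, aR_riordan]
  rw [heq]
  exact h
end

section
/- Let a_0, a_1, a_2 ≥ 0 be real numbers with a_1^2 - 4 a_0 a_2 < 0. Then there exists n ≥ 1 such that det(T_n) < 0. -/
/-- The `n × n` tridiagonal Toeplitz matrix `T_n` with `a₁` on the main
diagonal, `a₀` on the superdiagonal and `a₂` on the subdiagonal. -/
def toeplitzT (a₀ a₁ a₂ : ℝ) (n : ℕ) : Matrix (Fin n) (Fin n) ℝ :=
  Matrix.of fun i j =>
    if (i : ℕ) = j then a₁
    else if (i : ℕ) + 1 = j then a₀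
    else if (j : ℕ) + 1 = i then a₂
    else 0

lemma toeplitzT_rec (a₀ a₁ a₂ : ℝ) (n : ℕ) :
    (toeplitzT a₀ a₁ a₂ (n+2)).det =
      a₁ * (toeplitzT a₀ a₁ a₂ (n+1)).det - a₀ * (a₂ * (toeplitzT a₀ a₁ a₂ n).det) := by
  have hM00 : ((toeplitzT a₀ a₁ a₂ (n+2)).submatrix Fin.succ ((0 : Fin (n+2)).succAbove)).det
      = (toeplitzT a₀ a₁ a₂ (n+1)).det := by
    congr 1
    ext i j
    simp [toeplitzT, Matrix.submatrix, Fin.succAbove, Fin.lt_def]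
  set N := (toeplitzT a₀ a₁ a₂ (n+2)).submatrix Fin.succ ((1 : Fin (n+2)).succAbove) with hN
  have hNdet : N.det = a₂ * (toeplitzT a₀ a₁ a₂ n).det := by
    rw [Matrix.det_succ_column_zero, Fin.sum_univ_succ]
    have h1 : ∀ i : Fin n, N i.succ 0 = 0 := by
      intro i
      simp [hN, toeplitzT, Fin.succAbove, Fin.lt_def]
    have h2 : N 0 0 = a₂ := by
      simp [hN, toeplitzT, Fin.succAbove, Fin.lt_def]
    have h3 : (N.submatrix Fin.succ Fin.succ).det = (toeplitzT a₀ a₁ a₂ n).det := by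
      congr 1
      ext i j
      simp [hN, toeplitzT, Fin.succAbove, Fin.lt_def, Fin.succ_ne_zero]
    simp [h1, h2, h3]
  rw [Matrix.det_succ_row_zero, Fin.sum_univ_succ, Fin.sum_univ_succ]
  have h0 : ∀ j : Fin n, (toeplitzT a₀ a₁ a₂ (n+2)) 0 j.succ.succ = 0 := by
    intro j
    simp [toeplitzT]
  have ha : (toeplitzT a₀ a₁ a₂ (n+2)) 0 0 = a₁ := by simp [toeplitzT]
  have hb : (toeplitzT a₀ a₁ a₂ (n+2)) 0 ((0:Fin (n+1)).succ) = a₀ := by simp [toeplitzT]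
  rw [ha, hb]
  simp only [h0, mul_zero, zero_mul, Finset.sum_const_zero, add_zero]
  rw [hM00, show ((0:Fin (n+1)).succ) = (1 : Fin (n+2)) from rfl, ← hN, hNdet]
  norm_num [Fin.val_zero, Fin.val_one]
  ring

theorem exists_det_toeplitzT_neg
    (a₀ a₁ a₂ : ℝ) (ha₀ : 0 ≤ a₀) (ha₁ : 0 ≤ a₁) (ha₂ : 0 ≤ a₂)
    (hΔ : a₁ ^ 2 - 4 * a₀ * a₂ < 0) :
    ∃ n : ℕ, 1 ≤ n ∧ (toeplitzT a₀ a₁ a₂ n).det < 0 := by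
  set d : ℕ → ℝ := fun n => (toeplitzT a₀ a₁ a₂ n).det with hd
  have hd0 : d 0 = 1 := by simp [hd]
  have hd1 : d 1 = a₁ := by
    simp [hd, toeplitzT, Matrix.det_fin_one]
  have hrec : ∀ n, d (n+2) = a₁ * d (n+1) - a₀ * (a₂ * d n) := fun n =>
    toeplitzT_rec a₀ a₁ a₂ n
  suffices h : ∃ n : ℕ, 1 ≤ n ∧ d n < 0 from h
  clear_value d
  clear hd
  have hprod : 0 < a₀ * a₂ := by nlinarith
  set r := Real.sqrt (a₀ * a₂) with hr
  have hrpos : 0 < r := Real.sqrt_pos.mpr hprod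
  have hr2 : r ^ 2 = a₀ * a₂ := Real.sq_sqrt hprod.le
  have ha1lt : a₁ < 2 * r := by nlinarith
  set c : ℝ := a₁ / (2 * r) with hc
  have hc0 : 0 ≤ c := by positivity
  have hc1 : c < 1 := by
    rw [hc, div_lt_one (by linarith)]; linarith
  set θ := Real.arccos c with hθ
  have hθpos : 0 < θ := Real.arccos_pos.mpr hc1
  have hθle : θ ≤ Real.pi / 2 := Real.arccos_le_pi_div_two.mpr hc0
  have hcos : Real.cos θ = c := Real.cos_arccos (by linarith) (by linarith)
  have hsinpos : 0 < Real.sin θ :=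
    Real.sin_pos_of_pos_of_lt_pi hθpos (lt_of_le_of_lt hθle (by linarith [Real.pi_pos]))
  have ha1eq : a₁ = 2 * r * Real.cos θ := by
    rw [hcos, hc]; field_simp
  have H : ∀ n : ℕ, d n * Real.sin θ = r ^ n * Real.sin ((n + 1) * θ) ∧
      d (n+1) * Real.sin θ = r ^ (n+1) * Real.sin ((n + 2) * θ) := by
    intro n
    induction n with
    | zero =>
      constructor
      · simp [hd0]
      · have : ((0:ℕ) + 2 : ℝ) * θ = θ + θ := by ring
        rw [hd1, pow_one, this, Real.sin_add, hcos, hc]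
        field_simp
        ring
    | succ k ih =>
      obtain ⟨ih1, ih2⟩ := ih
      constructor
      · rw [show (((k:ℕ)+1 : ℕ) : ℝ) + 1 = (k:ℝ) + 2 by push_cast; ring]
        exact ih2
      · have hs : Real.sin (((k:ℝ) + 3) * θ) =
            2 * Real.cos θ * Real.sin (((k:ℝ) + 2) * θ) - Real.sin (((k:ℝ) + 1) * θ) := by
          have e1 : ((k:ℝ) + 3) * θ = ((k:ℝ) + 2) * θ + θ := by ring
          have e2 : ((k:ℝ) + 1) * θ = ((k:ℝ) + 2) * θ - θ := by ring
          rw [e1, e2, Real.sin_add, Real.sin_sub]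
          ring
        rw [show (((k:ℕ)+1 : ℕ) : ℝ) + 2 = (k:ℝ) + 3 by push_cast; ring, hs,
          show k + 1 + 1 = k + 2 from rfl, hrec k]
        rw [show (a₁ * d (k+1) - a₀ * (a₂ * d k)) * Real.sin θ
            = a₁ * (d (k+1) * Real.sin θ) - a₀ * a₂ * (d k * Real.sin θ) by ring,
          ih1, ih2, ha1eq, ← hr2]
        ring
  set m : ℕ := ⌊Real.pi / θ⌋₊ with hm
  have hm2 : 2 ≤ m := by
    have : (2:ℝ) ≤ Real.pi / θ := by
      rw [le_div_iff₀ hθpos]; linarith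
    exact Nat.le_floor (by exact_mod_cast this)
  have hmlt : Real.pi < (m + 1 : ℝ) * θ := by
    have h := Nat.lt_floor_add_one (Real.pi / θ)
    calc Real.pi = (Real.pi / θ) * θ := by field_simp
      _ < (m + 1 : ℝ) * θ := by
          apply mul_lt_mul_of_pos_right _ hθpos
          exact_mod_cast h
  have hmle : (m + 1 : ℝ) * θ < 2 * Real.pi := by
    have h1 : (m : ℝ) ≤ Real.pi / θ := Nat.floor_le (by positivity)
    have h2 : (m : ℝ) * θ ≤ Real.pi := by
      rw [← div_mul_cancel₀ Real.pi hθpos.ne']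
      exact mul_le_mul_of_nonneg_right h1 hθpos.le
    have hπ := Real.pi_pos
    calc (m + 1 : ℝ) * θ = (m:ℝ) * θ + θ := by ring
      _ ≤ Real.pi + Real.pi / 2 := by linarith
      _ < 2 * Real.pi := by linarith
  have hsinneg : Real.sin ((m + 1 : ℝ) * θ) < 0 := by
    have e : Real.sin ((m + 1 : ℝ) * θ) = - Real.sin ((m + 1 : ℝ) * θ - Real.pi) := by
      rw [Real.sin_sub_pi]; ring
    have hpos : 0 < Real.sin ((m + 1 : ℝ) * θ - Real.pi) :=
      Real.sin_pos_of_pos_of_lt_pi (by linarith) (by linarith)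
    rw [e]; linarith
  refine ⟨m, by omega, ?_⟩
  have hk := (H m).1
  have hneg : d m * Real.sin θ < 0 := by
    rw [hk]
    exact mul_neg_of_pos_of_neg (pow_pos hrpos m) hsinneg
  nlinarith
end

section
/- For real formal power series g(t) = Σ_{n≥0} g_n t^n (g_0 ≠ 0) and f(t) = Σ_{n≥1} f_n t^n (f_1 ≠ 0), the Riordan array (g, f) equals the matrix product [g, f] · ([1] ⊕ (g, f)), where [g, f] is the quasi-Riordan array and [1] ⊕ (g, f) denotes the infinite matrix with (0,0) entry 1, with (i+1, j+1) entry equal to the (i,j) entry of (g, f), and all other entries 0. -/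
/-- The direct sum `[1] ⊕ M`: `(0,0)` entry is `1`, `(i+1,j+1)` entry is
`M i j`, and all other entries are `0`. -/
def oneOplus (M : ℕ → ℕ → ℝ) : ℕ → ℕ → ℝ := fun n k =>
  match n, k with
  | 0, 0 => 1
  | 0, _ + 1 => 0
  | _ + 1, 0 => 0
  | n + 1, k + 1 => M n k

theorem riordan_eq_quasiRiordan_mul_oneOplus
    (g f : PowerSeries ℝ)
    (hg : PowerSeries.constantCoeff g ≠ 0)
    (hf0 : PowerSeries.coeff 0 f = 0)
    (hf1 : PowerSeries.coeff 1 f ≠ 0) :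
    riordan g f = matProd (quasiRiordan g f) (oneOplus (riordan g f)) := by
  funext n k
  cases k with
  | zero =>
    simp only [matProd, riordan, pow_zero, mul_one]
    rw [Finset.sum_eq_single 0]
    · simp [quasiRiordan, oneOplus]
    · intro j _ hj0
      obtain ⟨i, rfl⟩ := Nat.exists_eq_succ_of_ne_zero hj0
      simp [oneOplus]
    · simp
  | succ k =>
    simp only [matProd]
    rw [Finset.sum_range_succ']
    simp only [oneOplus, mul_zero, add_zero, quasiRiordan, Nat.succ_ne_zero, if_false,
      Nat.add_sub_cancel, riordan]
    rw [Finset.sum_congr rfl (fun j hj => ?_), pow_succ, ← mul_assoc,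
      PowerSeries.coeff_mul, Finset.Nat.sum_antidiagonal_eq_sum_range_succ_mk,
      Finset.sum_range_succ, Nat.sub_self, hf0, mul_zero, add_zero]
    have hjn : j ≤ n := le_of_lt (Finset.mem_range.mp hj)
    rw [mul_comm]
    congr 1
    have := PowerSeries.coeff_X_pow_mul f j (n - j)
    rwa [Nat.sub_add_cancel hjn] at this
end
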